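/- There is a function g : ℤ₊ → ℝ₊ with g(k₀) → ∞ as k₀ → ∞ such that, for all n > k₀, N = 2^n, and all x, y ∈ V_N with d^N(x,y) ≥ 2^{√k₀}, one has ρ_{N,k₀}(x,y) ≤ ρ_{N,0}(x,y) − g(k₀). (In fact one may take g(k₀) = √k₀ − 1.) -/

import Mathlib

open MeasureTheory ProbabilityTheory
open scoped ENNReal NNReal Classical

noncomputable section

/-- The box `V_N = ([0,N-1] ∩ ℤ)²`. -/
def V (N : ℕ) : Finset (ℤ × ℤ) :=
  Finset.Icc 0 ((N : ℤ) - 1) ×ˢ Finset.Icc 0 ((N : ℤ) - 1)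

/-- The interior `V_N° = ((0,N-1) ∩ ℤ)²`. -/
def Vint (N : ℕ) : Finset (ℤ × ℤ) :=
  Finset.Ioo 0 ((N : ℤ) - 1) ×ˢ Finset.Ioo 0 ((N : ℤ) - 1)

/-- The maximum of `f` over a finite set (`0` for the empty set). -/
def fmax (s : Finset (ℤ × ℤ)) (f : ℤ × ℤ → ℝ) : ℝ :=
  if h : s.Nonempty then s.sup' h f else 0

/-- The four nearest-neighbour steps of simple random walk on ℤ². -/
def nbrs : Finset (ℤ × ℤ) := {(1, 0), (-1, 0), (0, 1), (0, -1)}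

/-- `killedKernel N m x y = P^x(w_j ∈ V_N° for all j < m, and w_m = y)`, the m-step
transition function of simple random walk killed upon leaving `V_N°`. -/
def killedKernel (N : ℕ) : ℕ → ℤ × ℤ → ℤ × ℤ → ℝ
  | 0, x, y => if x = y then 1 else 0
  | m + 1, x, y =>
      if x ∈ Vint N then (1 / 4 : ℝ) * ∑ d ∈ nbrs, killedKernel N m (x + d) y else 0

/-- The Green function `G_N(x,y) = E^x[∑_{m=0}^τ 1_{w_m = y}]`, with `G_N(x,·) = 0`
for `x ∈ ∂V_N`. -/
def greenFn (N : ℕ) (x y : ℤ × ℤ) : ℝ :=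
  if x ∈ Vint N then ∑' m : ℕ, killedKernel N m x y else 0

/-- `x ∼_N y`, i.e. `x - y ∈ (Nℤ)²`. -/
def simRel (N : ℕ) (x y : ℤ × ℤ) : Prop :=
  (N : ℤ) ∣ (x.1 - y.1) ∧ (N : ℤ) ∣ (x.2 - y.2)

/-- `torusKernel N m x y = P^x(w_m ∼_N y)` for simple random walk on ℤ². -/
def torusKernel (N : ℕ) : ℕ → ℤ × ℤ → ℤ × ℤ → ℝ
  | 0, x, y => if simRel N x y then 1 else 0
  | m + 1, x, y => (1 / 4 : ℝ) * ∑ d ∈ nbrs, torusKernel N m (x + d) y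

/-- The torus Green function `Ḡ_N(x,y) = E^x[∑_{m=0}^{τ'} 1_{w_m ∼_N y}]`, where `τ'` is
an independent exponential time of parameter `1/N²` (so `P(τ' ≥ m) = exp(-m/N²)`). -/
def torusGreen (N : ℕ) (x y : ℤ × ℤ) : ℝ :=
  ∑' m : ℕ, Real.exp (-(m : ℝ) / (N : ℝ) ^ 2) * torusKernel N m x y

/-- Euclidean norm on ℤ². -/
def euclNorm (v : ℤ × ℤ) : ℝ := Real.sqrt ((v.1 : ℝ) ^ 2 + (v.2 : ℝ) ^ 2)

/-- ℓ∞ norm on ℤ². -/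
def supNorm (v : ℤ × ℤ) : ℝ := max |(v.1 : ℝ)| |(v.2 : ℝ)|

/-- Torus (euclidean) distance `d^N(x,y) = min{‖x-z‖ : z ∼_N y}`. -/
def dN (N : ℕ) (x y : ℤ × ℤ) : ℝ :=
  sInf {r : ℝ | ∃ z : ℤ × ℤ, simRel N z y ∧ r = euclNorm (x - z)}

/-- Torus ℓ∞ distance `d_∞^N(x,y) = min{‖x-z‖_∞ : z ∼_N y}`. -/
def dNinf (N : ℕ) (x y : ℤ × ℤ) : ℝ :=
  sInf {r : ℝ | ∃ z : ℤ × ℤ, simRel N z y ∧ r = supNorm (x - z)}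

/-- `{X_x}_{x ∈ s}` is a centered Gaussian field with covariance `G` on `s`: every finite
linear combination of the `X_x`, `x ∈ s`, is a centered Gaussian variable, and the
covariances on `s` are given by `G`. -/
def IsCenteredGaussianFieldOn {Ω : Type} [MeasurableSpace Ω] (P : Measure Ω)
    (X : ℤ × ℤ → Ω → ℝ) (s : Finset (ℤ × ℤ)) (G : ℤ × ℤ → ℤ × ℤ → ℝ) : Prop :=
  (∀ x ∈ s, Measurable (X x)) ∧
  (∀ t : Finset (ℤ × ℤ), t ⊆ s → ∀ c : ℤ × ℤ → ℝ, ∃ v : ℝ≥0,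
      Measure.map (fun ω => ∑ i ∈ t, c i * X i ω) P = gaussianReal 0 v) ∧
  ∀ x ∈ s, ∀ y ∈ s, ∫ ω, X x ω * X y ω ∂P = G x y

/-- The lower-left corners of the squares of side `2^k` (elements of `B_k`) containing `z`. -/
def corners (k : ℕ) (z : ℤ × ℤ) : Finset (ℤ × ℤ) :=
  Finset.Icc (z - ((2 : ℤ) ^ k - 1, (2 : ℤ) ^ k - 1)) z

/-- Reduction of a corner modulo `N`, identifying a square of `B_k` with the unique
`B' ∈ B_k^N` with `B ∼_N B'`. -/
def modN (N : ℕ) (v : ℤ × ℤ) : ℤ × ℤ := (v.1 % (N : ℤ), v.2 % (N : ℤ))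

/-- Partial sums of the MBRW: `∑_{k=lo}^{hi} ∑_{B ∈ B_k(z)} b_{k,B}^N`, where a square is
identified with its lower-left corner and `b^N_{k,B} = b_{k,B'}` for `B ∼_N B' ∈ B_k^N`.
In particular `mbrwSum N 0 n b = S^N`, `mbrwSum N k₀ n b = S^{N,k₀}` and
`mbrwSum N (n-j) n b = S^N(j)`. -/
def mbrwSum {Ω : Type} (N lo hi : ℕ) (b : ℕ → ℤ × ℤ → Ω → ℝ) (z : ℤ × ℤ) (ω : Ω) : ℝ :=
  ∑ k ∈ Finset.Icc lo hi, ∑ v ∈ corners k z, b k (modN N v) ω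

/-- `{b_{k,B}}_{0 ≤ k ≤ n, B ∈ B_k^N}` (squares identified with their lower-left corners,
which lie in `V_N`) is a family of independent centered Gaussian variables of variance
`2^{-2k}`: the family is jointly Gaussian and the covariances are
`E[b_{k,v} b_{k',v'}] = 2^{-2k} 1_{(k,v) = (k',v')}`. -/
def IsMBRWBase {Ω : Type} [MeasurableSpace Ω] (P : Measure Ω) (N n : ℕ)
    (b : ℕ → ℤ × ℤ → Ω → ℝ) : Prop :=
  (∀ k ≤ n, ∀ v ∈ V N, Measurable (b k v)) ∧
  (∀ t : Finset (ℕ × (ℤ × ℤ)), (∀ p ∈ t, p.1 ≤ n ∧ p.2 ∈ V N) →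
      ∀ c : ℕ × (ℤ × ℤ) → ℝ, ∃ v : ℝ≥0,
      Measure.map (fun ω => ∑ p ∈ t, c p * b p.1 p.2 ω) P = gaussianReal 0 v) ∧
  ∀ k k' : ℕ, ∀ v v' : ℤ × ℤ, k ≤ n → k' ≤ n → v ∈ V N → v' ∈ V N →
    ∫ ω, b k v ω * b k' v' ω ∂P = if k = k' ∧ v = v' then ((2 : ℝ) ^ (2 * k))⁻¹ else 0

/-- `V_N' = V_{N/2} + (N/4, N/4)`. -/
def V' (N : ℕ) : Finset (ℤ × ℤ) :=
  (V (N / 2)).image fun z => z + (((N / 4 : ℕ) : ℤ), ((N / 4 : ℕ) : ℤ))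

/-- `A_n = 2√(log 2)·n − (3/(4√(log 2)))·log n`. -/
def An (n : ℕ) : ℝ :=
  2 * Real.sqrt (Real.log 2) * n - 3 / (4 * Real.sqrt (Real.log 2)) * Real.log n

/-- The barrier `L_n(j)`: `L_n(0) = L_n(n) = 0`, `L_n(j) = c₅ log j` for `1 ≤ j ≤ ⌊n/2⌋`
and `L_n(j) = c₅ log (n-j)` for `⌊n/2⌋ < j ≤ n-1`. -/
def Lfun (c₅ : ℝ) (n j : ℕ) : ℝ :=
  if j = 0 ∨ j = n then 0
  else if j ≤ n / 2 then c₅ * Real.log j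
  else c₅ * Real.log ((n - j : ℕ) : ℝ)


/-!
Split the field by scale: `S_z^{N,k₀} = ∑_{k=k₀}^n L_k(z)` with `L_k(z) = ∑_{B ∈ B_k(z)} b^N_{k,B}`.
Distinct scales are uncorrelated, so `ρ_{N,k₀}(x,y) = ∑_{k=k₀}^n E[(L_k(x) - L_k(y))²]`, and
`ρ_{N,0} - ρ_{N,k₀}` is the sum of the nonnegative terms with `k < k₀`. When
`2^{k+1} ≤ d^N(x,y)`, no square of side `2^k` containing `x` is `∼_N` one containing `y`, so
`L_k(x)` and `L_k(y)` are uncorrelated, each of variance `4^k · 2^{-2k} = 1`, and the term is `2`.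
This applies to every `k < ⌊√k₀⌋`, which gives the gain `g(k₀) = 2⌊√k₀⌋`.
-/

open Finset

section SecondMoment

variable {Ω : Type*} [MeasurableSpace Ω] {P : Measure Ω}

lemma integral_sum_mul_sum {ι κ : Type*} (s : Finset ι) (t : Finset κ) {X : ι → Ω → ℝ}
    {Y : κ → Ω → ℝ} (hX : ∀ i ∈ s, MemLp (X i) 2 P) (hY : ∀ j ∈ t, MemLp (Y j) 2 P) :
    ∫ ω, (∑ i ∈ s, X i ω) * (∑ j ∈ t, Y j ω) ∂P = ∑ i ∈ s, ∑ j ∈ t, ∫ ω, X i ω * Y j ω ∂P := by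
  have hXY : ∀ i ∈ s, ∀ j ∈ t, Integrable (fun ω => X i ω * Y j ω) P :=
    fun i hi j hj => (hX i hi).integrable_mul (hY j hj)
  simp_rw [sum_mul_sum]
  rw [integral_finsetSum _ fun i hi => integrable_finsetSum _ (hXY i hi)]
  exact sum_congr rfl fun i hi => integral_finsetSum _ (hXY i hi)

lemma integral_sub_mul_sub {X X' Y Y' : Ω → ℝ} (hX : MemLp X 2 P) (hX' : MemLp X' 2 P)
    (hY : MemLp Y 2 P) (hY' : MemLp Y' 2 P) :
    ∫ ω, (X ω - X' ω) * (Y ω - Y' ω) ∂P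
      = ∫ ω, X ω * Y ω ∂P - ∫ ω, X ω * Y' ω ∂P - ∫ ω, X' ω * Y ω ∂P
        + ∫ ω, X' ω * Y' ω ∂P := by
  have hXY : Integrable (fun ω => X ω * Y ω) P := hX.integrable_mul hY
  have hXY' : Integrable (fun ω => X ω * Y' ω) P := hX.integrable_mul hY'
  have hX'Y : Integrable (fun ω => X' ω * Y ω) P := hX'.integrable_mul hY
  have hX'Y' : Integrable (fun ω => X' ω * Y' ω) P := hX'.integrable_mul hY'
  simp_rw [sub_mul, mul_sub]
  rw [integral_sub (f := fun ω => X ω * Y ω - X ω * Y' ω)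
      (g := fun ω => X' ω * Y ω - X' ω * Y' ω) (hXY.sub hXY') (hX'Y.sub hX'Y'),
    integral_sub hXY hXY', integral_sub hX'Y hX'Y']
  ring

lemma integral_sum_sq_of_orthogonal {ι : Type*} (s : Finset ι) {X : ι → Ω → ℝ}
    (hX : ∀ i ∈ s, MemLp (X i) 2 P)
    (horth : ∀ i ∈ s, ∀ j ∈ s, i ≠ j → ∫ ω, X i ω * X j ω ∂P = 0) :
    ∫ ω, (∑ i ∈ s, X i ω) ^ 2 ∂P = ∑ i ∈ s, ∫ ω, X i ω ^ 2 ∂P := by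
  simp_rw [sq]
  rw [integral_sum_mul_sum s s hX hX]
  exact sum_congr rfl fun i hi =>
    sum_eq_single_of_mem i hi fun j hj hji => horth i hi j hj hji.symm

end SecondMoment

section Squares

lemma modN_mem_V {N : ℕ} (hN : 0 < N) (v : ℤ × ℤ) : modN N v ∈ V N := by
  have hN' : (0 : ℤ) < N := by exact_mod_cast hN
  simp only [V, modN, mem_product, mem_Icc]
  have := Int.emod_lt_of_pos v.1 hN'
  have := Int.emod_lt_of_pos v.2 hN'
  exact ⟨⟨Int.emod_nonneg _ hN'.ne', by omega⟩, ⟨Int.emod_nonneg _ hN'.ne', by omega⟩⟩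

lemma mem_corners {k : ℕ} {z v : ℤ × ℤ} :
    v ∈ corners k z ↔ (z.1 - (2 ^ k - 1) ≤ v.1 ∧ v.1 ≤ z.1) ∧
      (z.2 - (2 ^ k - 1) ≤ v.2 ∧ v.2 ≤ z.2) := by
  simp only [corners, mem_Icc, Prod.le_def, Prod.fst_sub, Prod.snd_sub]
  tauto

lemma card_corners (k : ℕ) (z : ℤ × ℤ) : #(corners k z) = 2 ^ k * 2 ^ k := by
  have hside : ∀ a : ℤ, (a + 1 - (a - (2 ^ k - 1))).toNat = 2 ^ k := fun a => by
    rw [show a + 1 - (a - (2 ^ k - 1)) = ((2 ^ k : ℕ) : ℤ) by push_cast; ring, Int.toNat_natCast]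
  rw [corners, Icc_prod_def, card_product]
  simp only [Prod.fst_sub, Prod.snd_sub, Int.card_Icc, hside]

lemma simRel_of_modN_eq {N : ℕ} {v v' : ℤ × ℤ} (h : modN N v = modN N v') : simRel N v v' := by
  simp only [modN, Prod.mk.injEq] at h
  exact ⟨(Int.ModEq.symm h.1).dvd, (Int.ModEq.symm h.2).dvd⟩

lemma eq_of_modN_eq_of_mem_corners {N k : ℕ} (hk : (2 : ℤ) ^ k ≤ N) {z v v' : ℤ × ℤ}
    (hv : v ∈ corners k z) (hv' : v' ∈ corners k z) (h : modN N v = modN N v') : v = v' := by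
  obtain ⟨d1, d2⟩ := simRel_of_modN_eq h
  rw [mem_corners] at hv hv'
  have h1 := Int.eq_zero_of_abs_lt_dvd d1 (by rw [abs_lt]; omega)
  have h2 := Int.eq_zero_of_abs_lt_dvd d2 (by rw [abs_lt]; omega)
  exact Prod.ext (by omega) (by omega)

lemma dN_le_euclNorm {N : ℕ} {x y z : ℤ × ℤ} (h : simRel N z y) : dN N x y ≤ euclNorm (x - z) :=
  csInf_le ⟨0, by rintro _ ⟨_, _, rfl⟩; exact Real.sqrt_nonneg _⟩ ⟨z, h, rfl⟩

lemma euclNorm_lt_of_abs_lt {v : ℤ × ℤ} {m : ℤ} (h1 : |v.1| < m) (h2 : |v.2| < m) :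
    euclNorm v < 2 * m := by
  have r1 : |(v.1 : ℝ)| < m := by exact_mod_cast h1
  have r2 : |(v.2 : ℝ)| < m := by exact_mod_cast h2
  rw [euclNorm, Real.sqrt_lt' (by linarith [abs_nonneg (v.1 : ℝ)])]
  nlinarith [sq_abs (v.1 : ℝ), sq_abs (v.2 : ℝ), abs_nonneg (v.1 : ℝ), abs_nonneg (v.2 : ℝ)]

/-- Two `∼_N`-equivalent squares of side `2^k` containing `x` and `y` would produce a translate
of `y` within distance `< 2^{k+1}` of `x`. -/
lemma modN_ne_of_le_dN {N k : ℕ} {x y : ℤ × ℤ} (hd : (2 : ℝ) ^ (k + 1) ≤ dN N x y)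
    {v v' : ℤ × ℤ} (hv : v ∈ corners k x) (hv' : v' ∈ corners k y) :
    modN N v ≠ modN N v' := by
  intro h
  obtain ⟨d1, d2⟩ := simRel_of_modN_eq h
  have hsim : simRel N (y + (v - v')) y := by
    constructor <;> simpa
  rw [mem_corners] at hv hv'
  have hnorm : euclNorm (x - (y + (v - v'))) < 2 * ((2 ^ k : ℤ) : ℝ) := by
    apply euclNorm_lt_of_abs_lt <;> simp only [Prod.fst_sub, Prod.snd_sub, Prod.fst_add,
      Prod.snd_add] <;> rw [abs_lt] <;> constructor <;> omega
  have := dN_le_euclNorm (x := x) hsim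
  push_cast at hnorm
  rw [pow_succ] at hd
  linarith

end Squares

section MBRW

variable {Ω : Type} [MeasurableSpace Ω] {P : Measure Ω} {N n : ℕ} {b : ℕ → ℤ × ℤ → Ω → ℝ}

def levelSum (N : ℕ) (b : ℕ → ℤ × ℤ → Ω → ℝ) (k : ℕ) (z : ℤ × ℤ) (ω : Ω) : ℝ :=
  ∑ v ∈ corners k z, b k (modN N v) ω

lemma IsMBRWBase.memLp (hb : IsMBRWBase P N n b) {k : ℕ} (hk : k ≤ n) {v : ℤ × ℤ}
    (hv : v ∈ V N) : MemLp (b k v) 2 P := by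
  obtain ⟨hmeas, -, hcov⟩ := hb
  have hsq := hcov k k v v hk hk hv hv
  rw [if_pos ⟨rfl, rfl⟩] at hsq
  have hint : Integrable (fun ω => b k v ω * b k v ω) P := by
    by_contra hni
    rw [integral_undef hni] at hsq
    exact (inv_pos.2 (pow_pos two_pos (2 * k))).ne hsq
  rw [memLp_two_iff_integrable_sq (hmeas k hk v hv).aestronglyMeasurable]
  simpa only [sq] using hint

lemma IsMBRWBase.memLp_levelSum (hb : IsMBRWBase P N n b) (hN : 0 < N) {k : ℕ} (hk : k ≤ n)
    (z : ℤ × ℤ) : MemLp (levelSum N b k z) 2 P :=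
  memLp_finsetSum _ fun v _ => hb.memLp hk (modN_mem_V hN v)

lemma IsMBRWBase.integral_levelSum_mul (hb : IsMBRWBase P N n b) (hN : 0 < N) {k k' : ℕ}
    (hk : k ≤ n) (hk' : k' ≤ n) (z z' : ℤ × ℤ) :
    ∫ ω, levelSum N b k z ω * levelSum N b k' z' ω ∂P
      = ∑ v ∈ corners k z, ∑ v' ∈ corners k' z',
          if k = k' ∧ modN N v = modN N v' then ((2 : ℝ) ^ (2 * k))⁻¹ else 0 :=
  (integral_sum_mul_sum _ _ (fun v _ => hb.memLp hk (modN_mem_V hN v))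
    fun v' _ => hb.memLp hk' (modN_mem_V hN v')).trans <|
    sum_congr rfl fun v _ => sum_congr rfl fun v' _ =>
      hb.2.2 k k' _ _ hk hk' (modN_mem_V hN v) (modN_mem_V hN v')

lemma IsMBRWBase.integral_levelSum_mul_of_ne (hb : IsMBRWBase P N n b) (hN : 0 < N)
    {k k' : ℕ} (hk : k ≤ n) (hk' : k' ≤ n) (hkk' : k ≠ k') (z z' : ℤ × ℤ) :
    ∫ ω, levelSum N b k z ω * levelSum N b k' z' ω ∂P = 0 := by
  rw [hb.integral_levelSum_mul hN hk hk']
  exact sum_eq_zero fun v _ => sum_eq_zero fun v' _ => if_neg fun h => hkk' h.1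

/-- The `4^k` squares of `B_k(z)` are pairwise `≁_N` as long as `2^k ≤ N`. -/
lemma IsMBRWBase.integral_levelSum_mul_self (hb : IsMBRWBase P N n b) {k : ℕ}
    (hkN : (2 : ℤ) ^ k ≤ N) (hk : k ≤ n) (z : ℤ × ℤ) :
    ∫ ω, levelSum N b k z ω * levelSum N b k z ω ∂P = 1 := by
  have hN : 0 < N := by have := pow_pos (two_pos (α := ℤ)) k; omega
  have hdiag : ∀ v ∈ corners k z, (∑ v' ∈ corners k z,
      if k = k ∧ modN N v = modN N v' then ((2 : ℝ) ^ (2 * k))⁻¹ else 0)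
        = ((2 : ℝ) ^ (2 * k))⁻¹ := fun v hv => by
    rw [sum_congr rfl fun v' hv' => if_congr ((and_iff_right rfl).trans
      ⟨eq_of_modN_eq_of_mem_corners hkN hv hv', congrArg (modN N)⟩) rfl rfl,
      sum_ite_eq, if_pos hv]
  rw [hb.integral_levelSum_mul hN hk hk, sum_congr rfl hdiag, sum_const, card_corners,
    nsmul_eq_mul]
  push_cast
  rw [two_mul, pow_add, mul_inv_cancel₀ (by positivity)]

lemma IsMBRWBase.integral_levelSum_mul_of_le_dN (hb : IsMBRWBase P N n b) (hN : 0 < N)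
    {k : ℕ} (hk : k ≤ n) {x y : ℤ × ℤ} (hd : (2 : ℝ) ^ (k + 1) ≤ dN N x y) :
    ∫ ω, levelSum N b k x ω * levelSum N b k y ω ∂P = 0 := by
  rw [hb.integral_levelSum_mul hN hk hk]
  exact sum_eq_zero fun v hv => sum_eq_zero fun v' hv' =>
    if_neg fun h => modN_ne_of_le_dN hd hv hv' h.2

lemma IsMBRWBase.integral_sq_mbrwSum_sub (hb : IsMBRWBase P N n b) (hN : 0 < N) (lo : ℕ)
    {hi : ℕ} (hhi : hi ≤ n) (x y : ℤ × ℤ) :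
    ∫ ω, (mbrwSum N lo hi b x ω - mbrwSum N lo hi b y ω) ^ 2 ∂P
      = ∑ k ∈ Icc lo hi, ∫ ω, (levelSum N b k x ω - levelSum N b k y ω) ^ 2 ∂P := by
  have hn : ∀ k ∈ Icc lo hi, k ≤ n := fun k hk => (mem_Icc.1 hk).2.trans hhi
  have hmem : ∀ k ∈ Icc lo hi, MemLp (fun ω => levelSum N b k x ω - levelSum N b k y ω) 2 P :=
    fun k hk => (hb.memLp_levelSum hN (hn k hk) x).sub (hb.memLp_levelSum hN (hn k hk) y)
  rw [← integral_sum_sq_of_orthogonal _ hmem]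
  · simp only [mbrwSum, levelSum, sum_sub_distrib]
  · intro k hk k' hk' hkk'
    have hkn := hn k hk
    have hk'n := hn k' hk'
    rw [integral_sub_mul_sub (hb.memLp_levelSum hN hkn x) (hb.memLp_levelSum hN hkn y)
      (hb.memLp_levelSum hN hk'n x) (hb.memLp_levelSum hN hk'n y)]
    simp only [hb.integral_levelSum_mul_of_ne hN hkn hk'n hkk', sub_zero, add_zero]

lemma IsMBRWBase.integral_sq_levelSum_sub_of_le_dN (hb : IsMBRWBase P N n b) {k : ℕ}
    (hkN : (2 : ℤ) ^ k ≤ N) (hk : k ≤ n) {x y : ℤ × ℤ} (hd : (2 : ℝ) ^ (k + 1) ≤ dN N x y) :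
    ∫ ω, (levelSum N b k x ω - levelSum N b k y ω) ^ 2 ∂P = 2 := by
  have hN : 0 < N := by have := pow_pos (two_pos (α := ℤ)) k; omega
  have hxy := hb.integral_levelSum_mul_of_le_dN hN hk hd
  have hyx : ∫ ω, levelSum N b k y ω * levelSum N b k x ω ∂P = 0 := by
    simp_rw [mul_comm (levelSum N b k y _)]
    exact hxy
  simp_rw [sq]
  rw [integral_sub_mul_sub (hb.memLp_levelSum hN hk x) (hb.memLp_levelSum hN hk y)
    (hb.memLp_levelSum hN hk x) (hb.memLp_levelSum hN hk y), hxy, hyx,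
    hb.integral_levelSum_mul_self hkN hk, hb.integral_levelSum_mul_self hkN hk]
  norm_num

lemma IsMBRWBase.two_mul_le_sum_integral_sq_levelSum_sub (hb : IsMBRWBase P N n b)
    (hN : (2 : ℤ) ^ n ≤ N) {m k₀ : ℕ} (hm : m ≤ k₀) (hmn : m ≤ n) {x y : ℤ × ℤ}
    (hd : (2 : ℝ) ^ m ≤ dN N x y) :
    2 * (m : ℝ) ≤ ∑ k ∈ range k₀, ∫ ω, (levelSum N b k x ω - levelSum N b k y ω) ^ 2 ∂P :=
  calc 2 * (m : ℝ) = ∑ k ∈ range m, (2 : ℝ) := by simp [mul_comm]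
    _ = ∑ k ∈ range m, ∫ ω, (levelSum N b k x ω - levelSum N b k y ω) ^ 2 ∂P := by
      refine sum_congr rfl fun k hk => ?_
      have hkm := mem_range.1 hk
      refine (hb.integral_sq_levelSum_sub_of_le_dN ?_ (by omega) ?_).symm
      · exact (pow_le_pow_right₀ one_le_two (by omega)).trans hN
      · exact (pow_le_pow_right₀ one_le_two hkm).trans hd
    _ ≤ _ := sum_le_sum_of_subset_of_nonneg (range_subset_range.2 hm)
      fun _ _ _ => integral_nonneg fun _ => sq_nonneg _

end MBRW

lemma tendsto_nat_sqrt_atTop : Filter.Tendsto Nat.sqrt Filter.atTop Filter.atTop :=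
  Filter.tendsto_atTop_atTop_of_monotone (fun _ _ => Nat.sqrt_le_sqrt)
    fun m => ⟨m ^ 2, (Nat.sqrt_eq' m).ge⟩

theorem rho_truncation_gain_general {Ω : Type} [MeasurableSpace Ω]
    (P : Measure Ω) (b : ℕ → ℕ → ℤ × ℤ → Ω → ℝ)
    (hb : ∀ n : ℕ, IsMBRWBase P (2 ^ n) n (b n)) :
    ∃ g : ℕ → ℝ, (∀ k₀ : ℕ, 0 ≤ g k₀) ∧
      Filter.Tendsto g Filter.atTop Filter.atTop ∧
      ∀ k₀ n : ℕ, k₀ < n → ∀ x ∈ V (2 ^ n), ∀ y ∈ V (2 ^ n),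
        (2 : ℝ) ^ (Real.sqrt k₀) ≤ dN (2 ^ n) x y →
        ∫ ω, (mbrwSum (2 ^ n) k₀ n (b n) x ω - mbrwSum (2 ^ n) k₀ n (b n) y ω) ^ 2 ∂P
          ≤ (∫ ω,
              (mbrwSum (2 ^ n) 0 n (b n) x ω - mbrwSum (2 ^ n) 0 n (b n) y ω) ^ 2 ∂P)
            - g k₀ := by
  refine ⟨fun k₀ => 2 * (Nat.sqrt k₀ : ℝ), fun _ => by positivity,
    (tendsto_natCast_atTop_atTop.comp tendsto_nat_sqrt_atTop).const_mul_atTop two_pos, ?_⟩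
  intro k₀ n hk₀n x _ y _ hd
  have hN : 0 < 2 ^ n := pow_pos two_pos n
  have hsqrt : (2 : ℝ) ^ Nat.sqrt k₀ ≤ dN (2 ^ n) x y := by
    refine le_trans ?_ hd
    rw [← Real.rpow_natCast]
    exact Real.rpow_le_rpow_of_exponent_le one_le_two Real.nat_sqrt_le_real_sqrt
  have hgain := (hb n).two_mul_le_sum_integral_sq_levelSum_sub (by push_cast; rfl)
    (Nat.sqrt_le_self k₀) ((Nat.sqrt_le_self k₀).trans hk₀n.le) hsqrt
  rw [(hb n).integral_sq_mbrwSum_sub hN k₀ le_rfl, (hb n).integral_sq_mbrwSum_sub hN 0 le_rfl,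
    ← Ico_add_one_right_eq_Icc, ← Ico_add_one_right_eq_Icc, Nat.Ico_zero_eq_range,
    ← sum_range_add_sum_Ico _ (by omega : k₀ ≤ n + 1)]
  linarith

/-- **Gain from truncation at well-separated points.** There is `g : ℕ → ℝ₊` with
`g(k₀) → ∞` such that, for all `n > k₀`, `N = 2^n` and `x, y ∈ V_N` with
`d^N(x,y) ≥ 2^{√k₀}`, one has `ρ_{N,k₀}(x,y) ≤ ρ_{N,0}(x,y) - g(k₀)`, where
`ρ_{N,k₀}(x,y) = E[(S_x^{N,k₀} - S_y^{N,k₀})²]`. -/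
theorem rho_truncation_gain {Ω : Type} [MeasurableSpace Ω]
    (P : Measure Ω) [IsProbabilityMeasure P] (b : ℕ → ℕ → ℤ × ℤ → Ω → ℝ)
    (hb : ∀ n : ℕ, IsMBRWBase P (2 ^ n) n (b n)) :
    ∃ g : ℕ → ℝ, (∀ k₀ : ℕ, 0 ≤ g k₀) ∧
      Filter.Tendsto g Filter.atTop Filter.atTop ∧
      ∀ k₀ n : ℕ, k₀ < n → ∀ x ∈ V (2 ^ n), ∀ y ∈ V (2 ^ n),
        (2 : ℝ) ^ (Real.sqrt k₀) ≤ dN (2 ^ n) x y →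
        ∫ ω, (mbrwSum (2 ^ n) k₀ n (b n) x ω - mbrwSum (2 ^ n) k₀ n (b n) y ω) ^ 2 ∂P
          ≤ (∫ ω,
              (mbrwSum (2 ^ n) 0 n (b n) x ω - mbrwSum (2 ^ n) 0 n (b n) y ω) ^ 2 ∂P)
            - g k₀ :=
  rho_truncation_gain_general P b hb

end
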